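/- Let p ≥ 3 be an integer and let Δ = {r ∈ S³ : ⟨u_k, r⟩ > 0 for all k ∈ {1,…,p−1}}. Then the closure of Δ in the subspace topology of S³ equals {r ∈ S³ : ⟨u_k, r⟩ ≥ 0 for all k ∈ {1,…,p−1}}, and the frontier (boundary) of Δ in S³ equals {r ∈ S³ : ⟨u_k, r⟩ ≥ 0 for all k ∈ {1,…,p−1}, and ⟨u_k, r⟩ = 0 for at least one k ∈ {1,…,p−1}}. -/

import Mathlib

open scoped RealInnerProductSpace

/-- The vector `u_k = (1 - cos(2πk/p), -sin(2πk/p), 0, 0) ∈ ℝ⁴`. -/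
noncomputable def uvec (p k : ℕ) : EuclideanSpace ℝ (Fin 4) :=
  !₂[1 - Real.cos (2 * Real.pi * (k : ℝ) / (p : ℝ)),
    -Real.sin (2 * Real.pi * (k : ℝ) / (p : ℝ)), 0, 0]

/-- The unit sphere `S³ ⊆ ℝ⁴` as a topological space. -/
abbrev Sph3 : Type := Metric.sphere (0 : EuclideanSpace ℝ (Fin 4)) 1

/-- The normal fundamental domain `Δ = {r ∈ S³ | ⟪u_k, r⟫ > 0 for k = 1, …, p-1}`,
as a subset of the sphere `S³` with its subspace topology. -/
noncomputable def Delta (p : ℕ) : Set Sph3 :=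
  {r | ∀ k : ℕ, 1 ≤ k → k ≤ p - 1 → 0 < ⟪uvec p k, (r : EuclideanSpace ℝ (Fin 4))⟫}

/-!
Given a point `q` with `⟪u_k, q⟫ > 0` for all `k`, the open cone `C = {x | ⟪u_k, x⟫ > 0 ∀ k}`
contains `r + t q` for every `t > 0` whenever `⟪u_k, r⟫ ≥ 0` for all `k`, and these points tend
to `r` as `t → 0⁺`. Radial projection `x ↦ x / ‖x‖` is continuous at `r ≠ 0`, fixes the sphere and
preserves `C`, so it moves them into `C ∩ S³ = Δ`. The frontier is then the closure minus the
open set `Δ`. For `Δ` itself, `q₀ = (1,0,0,0)` works: `⟪u_k, q₀⟫ = 1 - cos(2πk/p) > 0`.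
-/

open Metric Set Filter Topology

section SphereCone

variable {E : Type*} [NormedAddCommGroup E]

lemma mem_closure_sphere_preimage_of_cone [NormedSpace ℝ E] {C : Set E}
    (hC : ∀ x ∈ C, ∀ c : ℝ, 0 < c → c • x ∈ C) {r : sphere (0 : E) 1}
    (hr : (r : E) ∈ closure C) : r ∈ closure (((↑) : sphere (0 : E) 1 → E) ⁻¹' C) := by
  rw [closure_subtype, image_preimage_eq_inter_range, Subtype.range_coe]
  have hr0 : (r : E) ≠ 0 := ne_of_mem_sphere r.2 one_ne_zero
  have hr1 : ‖(r : E)‖ = 1 := mem_sphere_zero_iff_norm.mp r.2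
  have hproj : ContinuousAt (fun x : E => ‖x‖⁻¹ • x) r :=
    ((continuous_norm.continuousAt).inv₀ (norm_ne_zero_iff.mpr hr0)).smul continuousAt_id
  have hmem := mem_closure_image hproj (isOpen_compl_singleton.inter_closure ⟨hr0, hr⟩)
  simp only [hr1, inv_one, one_smul] at hmem
  refine closure_mono ?_ hmem
  rintro _ ⟨x, ⟨hx0, hxC⟩, rfl⟩
  have hx0' : ‖x‖ ≠ 0 := norm_ne_zero_iff.mpr hx0
  exact ⟨hC x hxC _ (inv_pos.mpr (norm_pos_iff.mpr hx0)), by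
    simp [norm_smul, hx0']⟩

variable [InnerProductSpace ℝ E] {ι : Type*} (u : ι → E) (s : Set ι)

lemma isClosed_sphere_forall_inner_nonneg :
    IsClosed {r : ↥(sphere (0 : E) 1) | ∀ i ∈ s, 0 ≤ ⟪u i, (r : E)⟫} := by
  simp only [ofPred_forall]
  exact isClosed_biInter fun i _ =>
    isClosed_le continuous_const (continuous_const.inner continuous_subtype_val)

lemma isOpen_sphere_forall_inner_pos (hs : s.Finite) :
    IsOpen {r : ↥(sphere (0 : E) 1) | ∀ i ∈ s, 0 < ⟪u i, (r : E)⟫} := by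
  simp only [ofPred_forall]
  exact hs.isOpen_biInter fun i _ =>
    isOpen_lt continuous_const (continuous_const.inner continuous_subtype_val)

lemma closure_sphere_forall_inner_pos {q : E} (hq : ∀ i ∈ s, 0 < ⟪u i, q⟫) :
    closure {r : ↥(sphere (0 : E) 1) | ∀ i ∈ s, 0 < ⟪u i, (r : E)⟫} =
      {r : ↥(sphere (0 : E) 1) | ∀ i ∈ s, 0 ≤ ⟪u i, (r : E)⟫} := by
  refine (closure_minimal (fun r hr i hi => (hr i hi).le)
    (isClosed_sphere_forall_inner_nonneg u s)).antisymm fun r hr => ?_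
  refine mem_closure_sphere_preimage_of_cone (C := {x | ∀ i ∈ s, 0 < ⟪u i, x⟫})
    (fun x hx c hc i hi => by simpa [inner_smul_right] using mul_pos hc (hx i hi)) ?_
  have hlim : Tendsto (fun t : ℝ => (r : E) + t • q) (𝓝[>] 0) (𝓝 r) := by
    simpa using (Continuous.tendsto (f := fun t : ℝ => (r : E) + t • q) (by fun_prop) 0).mono_left
      nhdsWithin_le_nhds
  refine mem_closure_of_tendsto hlim (eventually_nhdsWithin_of_forall fun t ht i hi => ?_)
  rw [inner_add_right, real_inner_smul_right]
  exact add_pos_of_nonneg_of_pos (hr i hi) (mul_pos ht (hq i hi))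

lemma frontier_sphere_forall_inner_pos (hs : s.Finite) {q : E} (hq : ∀ i ∈ s, 0 < ⟪u i, q⟫) :
    frontier {r : ↥(sphere (0 : E) 1) | ∀ i ∈ s, 0 < ⟪u i, (r : E)⟫} =
      {r : ↥(sphere (0 : E) 1) | (∀ i ∈ s, 0 ≤ ⟪u i, (r : E)⟫) ∧ ∃ i ∈ s, ⟪u i, (r : E)⟫ = 0} := by
  rw [(isOpen_sphere_forall_inner_pos u s hs).frontier_eq,
    closure_sphere_forall_inner_pos u s hq]
  ext r
  simp only [Set.mem_sdiff, mem_ofPred_eq, not_forall, not_lt, exists_prop]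
  exact and_congr_right fun hr =>
    exists_congr fun i => and_congr_right fun hi => ⟨(hr i hi).antisymm', le_of_eq⟩

end SphereCone

lemma Real.cos_lt_one_of_pos_of_lt_two_pi {x : ℝ} (h0 : 0 < x) (h2 : x < 2 * Real.pi) :
    Real.cos x < 1 :=
  (Real.cos_le_one x).lt_of_ne fun h =>
    h0.ne' ((Real.cos_eq_one_iff_of_lt_of_lt (by linarith [Real.pi_pos]) h2).mp h)

lemma inner_uvec_single_zero_pos {p k : ℕ} (hk : 1 ≤ k) (hkp : k ≤ p - 1) :
    0 < ⟪uvec p k, EuclideanSpace.single 0 1⟫ := by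
  have hk0 : (0 : ℝ) < k := by exact_mod_cast hk
  have hkp' : (k : ℝ) < p := by exact_mod_cast (show k < p by omega)
  have hinner : ⟪uvec p k, EuclideanSpace.single 0 1⟫ = 1 - Real.cos (2 * Real.pi * k / p) := by
    simp [uvec, PiLp.inner_apply]
  rw [hinner, sub_pos, mul_div_assoc]
  exact Real.cos_lt_one_of_pos_of_lt_two_pi
    (mul_pos Real.two_pi_pos (div_pos hk0 (hk0.trans hkp')))
    (mul_lt_of_lt_one_right Real.two_pi_pos ((div_lt_one (hk0.trans hkp')).mpr hkp'))

theorem stmt5_general (p : ℕ) :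
    closure (Delta p) =
      {r : Sph3 | ∀ k : ℕ, 1 ≤ k → k ≤ p - 1 →
        0 ≤ ⟪uvec p k, (r : EuclideanSpace ℝ (Fin 4))⟫} ∧
    frontier (Delta p) =
      {r : Sph3 | (∀ k : ℕ, 1 ≤ k → k ≤ p - 1 →
          0 ≤ ⟪uvec p k, (r : EuclideanSpace ℝ (Fin 4))⟫) ∧
        ∃ k : ℕ, 1 ≤ k ∧ k ≤ p - 1 ∧ ⟪uvec p k, (r : EuclideanSpace ℝ (Fin 4))⟫ = 0} := by
  have hq : ∀ k ∈ Icc 1 (p - 1), 0 < ⟪uvec p k, EuclideanSpace.single 0 1⟫ := fun k hk =>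
    inner_uvec_single_zero_pos hk.1 hk.2
  have hΔ : Delta p =
      {r : Sph3 | ∀ k ∈ Icc 1 (p - 1), 0 < ⟪uvec p k, (r : EuclideanSpace ℝ (Fin 4))⟫} := by
    simp only [Delta, mem_Icc, and_imp]
  rw [hΔ, closure_sphere_forall_inner_pos _ _ hq,
    frontier_sphere_forall_inner_pos _ _ (finite_Icc 1 (p - 1)) hq]
  simp only [mem_Icc, and_imp, and_assoc, and_self]

/-- For `p ≥ 3`, the closure of `Δ` in `S³` is
`{r ∈ S³ | ⟪u_k, r⟫ ≥ 0 ∀ k ∈ {1,…,p-1}}` and the frontier of `Δ` in `S³` is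
`{r ∈ S³ | ⟪u_k, r⟫ ≥ 0 ∀ k, and ⟪u_k, r⟫ = 0 for some k ∈ {1,…,p-1}}`. -/
theorem stmt5 (p : ℕ) (hp : 3 ≤ p) :
    closure (Delta p) =
      {r : Sph3 | ∀ k : ℕ, 1 ≤ k → k ≤ p - 1 →
        0 ≤ ⟪uvec p k, (r : EuclideanSpace ℝ (Fin 4))⟫} ∧
    frontier (Delta p) =
      {r : Sph3 | (∀ k : ℕ, 1 ≤ k → k ≤ p - 1 →
          0 ≤ ⟪uvec p k, (r : EuclideanSpace ℝ (Fin 4))⟫) ∧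
        ∃ k : ℕ, 1 ≤ k ∧ k ≤ p - 1 ∧ ⟪uvec p k, (r : EuclideanSpace ℝ (Fin 4))⟫ = 0} :=
  stmt5_general p
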